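/- For every integer r ≥ 2 one has τ̃_r ≤ 1/2, i.e., (1 − 2^{1−r})·H_r ≥ 1/2. -/

import Mathlib

open scoped BigOperators

/-- The binary entropy function `h(ξ) = ξ log₂(1/ξ) + (1-ξ) log₂(1/(1-ξ))`. -/
noncomputable def binEnt (x : ℝ) : ℝ :=
  x * Real.logb 2 x⁻¹ + (1 - x) * Real.logb 2 (1 - x)⁻¹

/-- `H_r = (1/(2^r-2)) ∑_{i=1}^{r-1} C(r,i) h(i/r)`. -/
noncomputable def Hent (r : ℕ) : ℝ :=
  (1 / ((2 : ℝ) ^ r - 2)) * ∑ i ∈ Finset.Icc 1 (r - 1), (r.choose i : ℝ) * binEnt ((i : ℝ) / r)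

/-- `τ̃_r = 1 - (1 - 2^{1-r}) H_r`. -/
noncomputable def tauT (r : ℕ) : ℝ := 1 - (1 - (2 : ℝ) ^ ((1 : ℤ) - (r : ℤ))) * Hent r

/-! With `S_r = ∑ C(r,i) h(i/r)` one has `(1 - 2^{1-r}) H_r = S_r / 2^r`, so the claim is
`S_r ≥ 2^{r-1}`. From `log y ≥ 1 - 1/y` one gets `h(x) ≥ 2x(1-x) / ln 2`, and the moment identity
`∑ C(r,i) i (r-i) = r(r-1) 2^{r-2}` turns this into `S_r ≥ 2^{r-1} (r-1) / (r ln 2)`, which suffices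
as soon as `(r-1)/r ≥ 3/4 > ln 2`, i.e. for `r ≥ 4`. For `r = 2, 3` the chord bound `h(x) ≥ 2x` on
`[0, 1/2]`, from the concavity of `h`, is enough. -/

open Finset Real

lemma binEnt_eq_binEntropy_div_log_two (x : ℝ) : binEnt x = binEntropy x / log 2 := by
  rw [binEnt, binEntropy, logb, logb]
  ring

lemma two_mul_mul_one_sub_le_binEntropy {p : ℝ} (h0 : 0 < p) (h1 : p < 1) :
    2 * p * (1 - p) ≤ binEntropy p := by
  have hq : 0 < 1 - p := sub_pos.2 h1
  have hlog_p : 1 - p ≤ log p⁻¹ := by simpa using one_sub_inv_le_log_of_pos (inv_pos.2 h0)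
  have hlog_q : p ≤ log (1 - p)⁻¹ := by simpa using one_sub_inv_le_log_of_pos (inv_pos.2 hq)
  rw [binEntropy]
  nlinarith [mul_le_mul_of_nonneg_left hlog_p h0.le, mul_le_mul_of_nonneg_left hlog_q hq.le]

lemma two_mul_mul_log_two_le_binEntropy {p : ℝ} (h0 : 0 ≤ p) (h1 : p ≤ 2⁻¹) :
    2 * p * log 2 ≤ binEntropy p := by
  have h := strictConcave_binEntropy.concaveOn.2 (Set.left_mem_Icc.2 zero_le_one)
    (⟨by norm_num, by norm_num⟩ : (2⁻¹ : ℝ) ∈ Set.Icc 0 1)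
    (show 0 ≤ 1 - 2 * p by linarith) (show 0 ≤ 2 * p by linarith) (by ring)
  simp only [smul_eq_mul, binEntropy_zero, binEntropy_two_inv, mul_zero, zero_add] at h
  rwa [show 2 * p * 2⁻¹ = p by ring] at h

lemma sum_Icc_choose_mul_mul_sub (n : ℕ) :
    ∑ i ∈ Icc 1 (n - 1), n.choose i * (i * (n - i)) = n * (n - 1) * 2 ^ (n - 2) := by
  obtain _ | _ | m := n
  · simp
  · simp
  -- `i C(n,i) = n C(n-1,i-1)`, then `(n-i) C(n-1,i-1) = (n-1) C(n-2,i-1)`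
  have hterm (j : ℕ) (hj : j ≤ m) : (m + 2).choose (j + 1) * ((j + 1) * (m + 2 - (j + 1)))
      = (m + 2) * (m + 1) * m.choose j := by
    have h1 := Nat.add_one_mul_choose_eq (m + 1) j
    have h2 := Nat.choose_mul_succ_eq m j
    rw [show m + 2 - (j + 1) = m + 1 - j by omega]
    nlinarith
  rw [← Ico_add_one_right_eq_Icc, sum_Ico_eq_sum_range]
  simp only [Nat.add_sub_cancel, add_comm 1]
  rw [sum_congr rfl fun j hj => hterm j (Nat.lt_succ_iff.1 (mem_range.1 hj)), ← mul_sum,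
    Nat.sum_range_choose]
  rfl

lemma sum_Icc_choose_mul_div_mul_one_sub_div (r : ℕ) :
    ∑ i ∈ Icc 1 (r - 1), (r.choose i : ℝ) * (i / r * (1 - i / r)) = (r - 1) / r * 2 ^ (r - 2) := by
  rcases Nat.eq_zero_or_pos r with rfl | hr
  · simp
  have hr' : (r : ℝ) ≠ 0 := by positivity
  have hcast : ∀ i ∈ Icc 1 (r - 1), (r.choose i : ℝ) * (i / r * (1 - i / r))
      = ((r.choose i * (i * (r - i)) : ℕ) : ℝ) / r ^ 2 := by
    intro i hi
    rw [Nat.cast_mul, Nat.cast_mul, Nat.cast_sub (by have := (mem_Icc.1 hi).2; omega)]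
    field_simp
  rw [sum_congr rfl hcast, ← sum_div, ← Nat.cast_sum, sum_Icc_choose_mul_mul_sub,
    Nat.cast_mul, Nat.cast_mul, Nat.cast_sub hr]
  push_cast
  field_simp

noncomputable def entropySum (r : ℕ) : ℝ :=
  ∑ i ∈ Icc 1 (r - 1), (r.choose i : ℝ) * binEnt ((i : ℝ) / r)

lemma one_sub_two_zpow_mul_Hent {r : ℕ} (hr : 2 ≤ r) :
    (1 - (2 : ℝ) ^ ((1 : ℤ) - r)) * Hent r = entropySum r / 2 ^ r := by
  have h4 : (2 : ℝ) ^ 2 ≤ 2 ^ r := pow_le_pow_right₀ one_le_two hr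
  have hne : (2 : ℝ) ^ r - 2 ≠ 0 := by linarith
  rw [zpow_sub₀ two_ne_zero, zpow_one, zpow_natCast, Hent, entropySum]
  field_simp

lemma two_pow_le_entropySum_of_four_le {r : ℕ} (hr : 4 ≤ r) : (2 : ℝ) ^ (r - 1) ≤ entropySum r := by
  have hl : 0 < log 2 := log_pos one_lt_two
  have hr' : (4 : ℝ) ≤ r := by exact_mod_cast hr
  calc (2 : ℝ) ^ (r - 1) ≤ 2 / log 2 * ((r - 1) / r * 2 ^ (r - 2)) := by
        have hk : 1 ≤ (r - 1) / (r * log 2) := by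
          rw [one_le_div (by positivity)]
          nlinarith [log_two_lt_d9]
        rw [show r - 1 = r - 2 + 1 by omega, pow_succ,
          show 2 / log 2 * ((r - 1) / r * 2 ^ (r - 2)) = 2 ^ (r - 2) * 2 * ((r - 1) / (r * log 2))
            by field_simp]
        exact le_mul_of_one_le_right (by positivity) hk
    _ = ∑ i ∈ Icc 1 (r - 1), (r.choose i : ℝ) * (2 * (i / r) * (1 - i / r) / log 2) := by
        rw [← sum_Icc_choose_mul_div_mul_one_sub_div, mul_sum]
        refine sum_congr rfl fun i _ => ?_
        ring
    _ ≤ entropySum r := by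
        refine sum_le_sum fun i hi => ?_
        obtain ⟨hi1, hi2⟩ := mem_Icc.1 hi
        have h0 : (0 : ℝ) < i / r := by positivity
        have h1 : (i : ℝ) / r < 1 := by
          rw [div_lt_one (by positivity)]
          exact_mod_cast (by omega : i < r)
        rw [binEnt_eq_binEntropy_div_log_two]
        gcongr
        exact two_mul_mul_one_sub_le_binEntropy h0 h1

lemma entropySum_two : entropySum 2 = 2 := by
  have hl : log 2 ≠ 0 := (log_pos one_lt_two).ne'
  simp [entropySum, binEnt_eq_binEntropy_div_log_two, hl]

lemma four_le_entropySum_three : 4 ≤ entropySum 3 := by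
  have hl : 0 < log 2 := log_pos one_lt_two
  have h : 2 / 3 ≤ binEntropy (1 / 3) / log 2 := by
    rw [le_div_iff₀ hl]
    linarith [two_mul_mul_log_two_le_binEntropy (p := 1 / 3) (by norm_num) (by norm_num)]
  have hsymm : binEntropy (2 / 3) = binEntropy (1 / 3) := by
    rw [← binEntropy_one_sub]
    norm_num
  rw [entropySum, show Icc 1 (3 - 1) = {1, 2} by rfl, sum_pair (by norm_num)]
  norm_num [binEnt_eq_binEntropy_div_log_two, hsymm]
  linarith

lemma two_pow_le_entropySum {r : ℕ} (hr : 2 ≤ r) : (2 : ℝ) ^ (r - 1) ≤ entropySum r := by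
  rcases lt_or_ge r 4 with h4 | h4
  · interval_cases r
    · norm_num [entropySum_two]
    · norm_num [four_le_entropySum_three]
  · exact two_pow_le_entropySum_of_four_le h4

/-- `τ̃_r ≤ 1/2` for all `r ≥ 2`, i.e. `(1 - 2^{1-r}) H_r ≥ 1/2`. -/
theorem stmt13 : ∀ r : ℕ, 2 ≤ r →
    tauT r ≤ 1 / 2 ∧ 1 / 2 ≤ (1 - (2 : ℝ) ^ ((1 : ℤ) - (r : ℤ))) * Hent r := by
  intro r hr
  have key : 1 / 2 ≤ (1 - (2 : ℝ) ^ ((1 : ℤ) - (r : ℤ))) * Hent r := by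
    have h2r : (2 : ℝ) ^ r = 2 ^ (r - 1) * 2 := by rw [← pow_succ, Nat.sub_add_cancel (by omega)]
    rw [one_sub_two_zpow_mul_Hent hr, le_div_iff₀ (by positivity), h2r]
    linarith [two_pow_le_entropySum hr]
  exact ⟨by rw [tauT]; linarith, key⟩
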